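/- With notation as in the construction theorem (E = Θ(S), O_S = ⋃_{ω∈S*} f_ω(C)), the closure of O_S equals E ∪ O_S. -/

import Mathlib

open Filter Set Topology

/-- Composition of the IFS maps along a finite word `ω = ω₁…ω_n`,
`f_ω = f_{ω₁} ∘ ⋯ ∘ f_{ω_n}`. -/
def wordMap {X : Type*} {N : ℕ} (f : Fin N → X → X) : List (Fin N) → X → X
  | [] => id
  | i :: w => f i ∘ wordMap f w

/-- Product of the contraction ratios along a finite word. -/
def wordRho {N : ℕ} (r : Fin N → ℝ) (w : List (Fin N)) : ℝ := (w.map r).prod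

/-- The set `S*` of finite prefixes of sequences in `S`
(with the convention that the empty word, whose map is the identity and whose
contraction ratio is `1`, is allowed). -/
def prefixSet {N : ℕ} (S : Set (ℕ → Fin N)) : Set (List (Fin N)) :=
  {w | ∃ ω ∈ S, ∃ n : ℕ, w = List.ofFn (fun k : Fin n => ω k)}



lemma wordMap_append {X : Type*} {N : ℕ} (f : Fin N → X → X) (w v : List (Fin N)) (x : X) :
    wordMap f (w ++ v) x = wordMap f w (wordMap f v x) := by
  induction w with
  | nil => rfl
  | cons i w ih => simp [wordMap, ih]

lemma wordRho_cons {N : ℕ} (r : Fin N → ℝ) (i : Fin N) (w : List (Fin N)) :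
    wordRho r (i :: w) = r i * wordRho r w := by simp [wordRho]

lemma dist_wordMap {X : Type*} [MetricSpace X] {N : ℕ} (f : Fin N → X → X) (r : Fin N → ℝ)
    (hf : ∀ i x y, dist (f i x) (f i y) = r i * dist x y) (w : List (Fin N)) (x y : X) :
    dist (wordMap f w x) (wordMap f w y) = wordRho r w * dist x y := by
  induction w with
  | nil => simp [wordMap, wordRho]
  | cons i w ih =>
      simp only [wordMap, Function.comp_apply, hf, ih, wordRho_cons]
      ring

lemma wordRho_le {N : ℕ} (r : Fin N → ℝ) {c : ℝ} (hc0 : 0 ≤ c)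
    (hrc : ∀ i, 0 ≤ r i ∧ r i ≤ c) (w : List (Fin N)) :
    0 ≤ wordRho r w ∧ wordRho r w ≤ c ^ w.length := by
  induction w with
  | nil => simp [wordRho]
  | cons i w ih =>
      rw [wordRho_cons]
      constructor
      · exact mul_nonneg (hrc i).1 ih.1
      · calc r i * wordRho r w ≤ c * c ^ w.length :=
              mul_le_mul (hrc i).2 ih.2 ih.1 hc0
          _ = c ^ (i :: w).length := by rw [List.length_cons, pow_succ']

lemma wordMap_continuous {X : Type*} [MetricSpace X] {N : ℕ} (f : Fin N → X → X)
    (hfc : ∀ i, Continuous (f i)) (w : List (Fin N)) :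
    Continuous (wordMap f w) := by
  induction w with
  | nil => exact continuous_id
  | cons i w ih => exact (hfc i).comp ih

lemma ofFn_split {N : ℕ} (ω : ℕ → Fin N) (p m : ℕ) :
    (List.ofFn fun k : Fin (p + m) => ω k) =
      (List.ofFn fun k : Fin p => ω k) ++ (List.ofFn fun k : Fin m => ω (p + k)) := by
  rw [List.ofFn_add]
  simp

lemma theta_decomp {X : Type*} [MetricSpace X] {N : ℕ} (f : Fin N → X → X)
    (hfc : ∀ i, Continuous (f i))
    (Θ : (ℕ → Fin N) → X)
    (hΘ : ∀ ω x, Tendsto (fun n => wordMap f (List.ofFn fun k : Fin n => ω k) x)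
      atTop (nhds (Θ ω)))
    (ω : ℕ → Fin N) (p : ℕ) (x0 : X) :
    Θ ω = wordMap f (List.ofFn fun k : Fin p => ω k) (Θ fun m => ω (p + m)) := by
  have hadd : Tendsto (fun m : ℕ => p + m) atTop atTop :=
    tendsto_atTop_mono (fun m => Nat.le_add_left m p) tendsto_id
  have h1 : Tendsto (fun m => wordMap f (List.ofFn fun k : Fin (p + m) => ω k) x0)
      atTop (nhds (Θ ω)) := (hΘ ω x0).comp hadd
  have h2 : (fun m => wordMap f (List.ofFn fun k : Fin (p + m) => ω k) x0) =
      fun m => wordMap f (List.ofFn fun k : Fin p => ω k)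
        (wordMap f (List.ofFn fun k : Fin m => ω (p + k)) x0) := by
    funext m
    rw [ofFn_split, wordMap_append]
  rw [h2] at h1
  have h3 : Tendsto (fun m => wordMap f (List.ofFn fun k : Fin p => ω k)
      (wordMap f (List.ofFn fun k : Fin m => ω (p + k)) x0)) atTop
      (nhds (wordMap f (List.ofFn fun k : Fin p => ω k) (Θ fun m => ω (p + m)))) :=
    ((wordMap_continuous f hfc _).tendsto _).comp (hΘ (fun m => ω (p + m)) x0)
  exact tendsto_nhds_unique h1 h3

lemma theta_bound {X : Type*} [MetricSpace X] {N : ℕ} (f : Fin N → X → X) (r : Fin N → ℝ)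
    (hf : ∀ i x y, dist (f i x) (f i y) = r i * dist x y)
    {c : ℝ} (hc0 : 0 ≤ c) (hc1 : c < 1) (hrc : ∀ i, 0 ≤ r i ∧ r i ≤ c)
    (x0 : X) {M : ℝ} (hM : ∀ i, dist x0 (f i x0) ≤ M)
    (Θ : (ℕ → Fin N) → X)
    (hΘ : ∀ ω x, Tendsto (fun n => wordMap f (List.ofFn fun k : Fin n => ω k) x)
      atTop (nhds (Θ ω)))
    (ω : ℕ → Fin N) :
    dist x0 (Θ ω) ≤ M / (1 - c) := by
  have hu : ∀ n, dist (wordMap f (List.ofFn fun k : Fin n => ω k) x0)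
      (wordMap f (List.ofFn fun k : Fin (n+1) => ω k) x0) ≤ M * c ^ n := by
    intro n
    have hsplit : (List.ofFn fun k : Fin (n+1) => ω k) =
        (List.ofFn fun k : Fin n => ω k) ++ [ω n] := by
      rw [ofFn_split ω n 1]; simp
    rw [hsplit, wordMap_append]
    have : wordMap f [ω n] x0 = f (ω n) x0 := rfl
    rw [this, dist_wordMap f r hf]
    have h1 := wordRho_le r hc0 hrc (List.ofFn fun k : Fin n => ω k)
    have hlen : (List.ofFn fun k : Fin n => ω k).length = n := by simp
    rw [hlen] at h1
    calc wordRho r (List.ofFn fun k : Fin n => ω k) * dist x0 (f (ω n) x0)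
        ≤ c ^ n * M := mul_le_mul h1.2 (hM (ω n)) dist_nonneg (pow_nonneg hc0 n)
      _ = M * c ^ n := mul_comm _ _
  have h0 : wordMap f (List.ofFn fun k : Fin 0 => ω k) x0 = x0 := by
    simp [wordMap]
  have := dist_le_of_le_geometric_of_tendsto₀ c M hc1 hu (hΘ ω x0)
  rwa [h0] at this

lemma theta_continuous {X : Type*} [MetricSpace X] {N : ℕ} (f : Fin N → X → X) (r : Fin N → ℝ)
    (hf : ∀ i x y, dist (f i x) (f i y) = r i * dist x y) (hfc : ∀ i, Continuous (f i))
    {c : ℝ} (hc0 : 0 ≤ c) (hc1 : c < 1) (hrc : ∀ i, 0 ≤ r i ∧ r i ≤ c)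
    (Θ : (ℕ → Fin N) → X)
    (hΘ : ∀ ω x, Tendsto (fun n => wordMap f (List.ofFn fun k : Fin n => ω k) x)
      atTop (nhds (Θ ω)))
    (x0 : X) {K : ℝ} (hK : ∀ ω, dist x0 (Θ ω) ≤ K) : Continuous Θ := by
  rw [continuous_iff_continuousAt]
  intro ω
  rw [ContinuousAt, Metric.tendsto_nhds]
  intro ε hε
  have hpow : Tendsto (fun n : ℕ => (2*K+1) * c ^ n) atTop (𝓝 0) := by
    simpa using (tendsto_pow_atTop_nhds_zero_of_lt_one hc0 hc1).const_mul (2*K+1)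
  have hK0 : 0 ≤ K := le_trans dist_nonneg (hK ω)
  obtain ⟨n, hn⟩ := (hpow.eventually (gt_mem_nhds hε)).exists
  have hcoord : ∀ k : ℕ, ∀ᶠ ω' in 𝓝 ω, ω' k = ω k := by
    intro k
    have h := (continuous_apply (A := fun _ : ℕ => Fin N) k).continuousAt (x := ω)
    rw [ContinuousAt, nhds_discrete (Fin N)] at h
    exact tendsto_pure.mp h
  have hU : ∀ᶠ ω' in 𝓝 ω, ∀ k ∈ Set.Iio n, ω' k = ω k :=
    (eventually_all_finite (Set.finite_Iio n)).2 fun k _ => hcoord k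
  filter_upwards [hU] with ω' hω'
  have hpre : (List.ofFn fun k : Fin n => ω' k) = (List.ofFn fun k : Fin n => ω k) :=
    congrArg _ (funext fun k => hω' k k.isLt)
  rw [theta_decomp f hfc Θ hΘ ω' n x0, theta_decomp f hfc Θ hΘ ω n x0, hpre,
    dist_wordMap f r hf]
  have h1 := wordRho_le r hc0 hrc (List.ofFn fun k : Fin n => ω k)
  have hlen : (List.ofFn fun k : Fin n => ω k).length = n := by simp
  rw [hlen] at h1
  have hdd : dist (Θ fun m => ω' (n+m)) (Θ fun m => ω (n+m)) ≤ 2*K+1 := by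
    calc dist (Θ fun m => ω' (n+m)) (Θ fun m => ω (n+m))
        ≤ dist x0 (Θ fun m => ω' (n+m)) + dist x0 (Θ fun m => ω (n+m)) :=
          dist_triangle_left _ _ _
      _ ≤ K + K := add_le_add (hK _) (hK _)
      _ ≤ 2*K+1 := by linarith
  calc wordRho r (List.ofFn fun k : Fin n => ω k) * dist (Θ fun m => ω' (n+m)) (Θ fun m => ω (n+m))
      ≤ c ^ n * (2*K+1) := mul_le_mul h1.2 hdd dist_nonneg (pow_nonneg hc0 n)
    _ = (2*K+1) * c ^ n := mul_comm _ _
    _ < ε := hn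


/-- closure(O_S) = E ∪ O_S, where E = Θ(S) and
O_S = ⋃_{ω ∈ S*} f_ω(C). -/
theorem stmt6 {X : Type*} [MetricSpace X] [CompleteSpace X]
    {N : ℕ} (f : Fin N → X → X) (r : Fin N → ℝ)
    (hr : ∀ i, r i ∈ Set.Ioo (0:ℝ) 1)
    (hf : ∀ i x y, dist (f i x) (f i y) = r i * dist x y)
    (S : Set (ℕ → Fin N)) (hS : IsCompact S) (hSne : S.Nonempty)
    (hshift : ∀ ω ∈ S, (fun n => ω (n + 1)) ∈ S)
    (Θ : (ℕ → Fin N) → X)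
    (hΘ : ∀ ω x, Tendsto (fun n => wordMap f (List.ofFn fun k : Fin n => ω k) x)
      atTop (nhds (Θ ω)))
    (C : Set X) (hCne : C.Nonempty) (hCc : IsCompact C) :
    closure (⋃ w ∈ prefixSet S, wordMap f w '' C) =
      Θ '' S ∪ ⋃ w ∈ prefixSet S, wordMap f w '' C := by
  obtain ⟨ω₀, hω₀⟩ := hSne
  have hNpos : 0 < N := by
    rcases Nat.eq_zero_or_pos N with h | h
    · subst h; exact (ω₀ 0).elim0
    · exact h
  obtain ⟨x0, hx0⟩ := hCne
  let i0 : Fin N := ⟨0, hNpos⟩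
  have hne : (Finset.univ : Finset (Fin N)).Nonempty := ⟨i0, Finset.mem_univ i0⟩
  set c := Finset.univ.sup' hne r with hcdef
  have hrc : ∀ i, 0 ≤ r i ∧ r i ≤ c :=
    fun i => ⟨(hr i).1.le, Finset.le_sup' r (Finset.mem_univ i)⟩
  have hc0 : 0 ≤ c := le_trans (hr i0).1.le (hrc i0).2
  have hc1 : c < 1 := (Finset.sup'_lt_iff hne).mpr fun i _ => (hr i).2
  set M := Finset.univ.sup' hne (fun i => dist x0 (f i x0)) with hMdef
  have hM : ∀ i, dist x0 (f i x0) ≤ M := fun i => Finset.le_sup' (fun j => dist x0 (f j x0)) (Finset.mem_univ i)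
  have hfc : ∀ i, Continuous (f i) := by
    intro i
    refine (LipschitzWith.of_dist_le_mul (K := (r i).toNNReal) fun x y => ?_).continuous
    rw [Real.coe_toNNReal _ (hr i).1.le, hf]
  have hK : ∀ ω, dist x0 (Θ ω) ≤ M / (1 - c) :=
    theta_bound f r hf hc0 hc1 hrc x0 hM Θ hΘ
  have hΘc : Continuous Θ := theta_continuous f r hf hfc hc0 hc1 hrc Θ hΘ x0 hK
  apply subset_antisymm
  · intro x hx
    obtain ⟨u, hu, hux⟩ := mem_closure_iff_seq_limit.mp hx
    have hmem : ∀ k, ∃ v ∈ prefixSet S, ∃ cc ∈ C, u k = wordMap f v cc := by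
      intro k
      have := hu k
      simp only [Set.mem_iUnion, Set.mem_image, exists_prop] at this
      obtain ⟨v, hv, cc, hcc, he⟩ := this
      exact ⟨v, hv, cc, hcc, he.symm⟩
    choose w hwpre cc hccC hue using hmem
    by_cases hcase : ∃ v, ∃ᶠ k in atTop, w k = v
    · obtain ⟨v, hv⟩ := hcase
      obtain ⟨φ, hφ, hφv⟩ := extraction_of_frequently_atTop hv
      obtain ⟨a, haC, ψ, hψ, hca⟩ :=
        hCc.tendsto_subseq (x := fun j => cc (φ j)) (fun j => hccC (φ j))
      have h1 : Tendsto (fun j => u (φ (ψ j))) atTop (𝓝 x) :=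
        hux.comp ((hφ.comp hψ).tendsto_atTop)
      have h2 : Tendsto (fun j => wordMap f v (cc (φ (ψ j)))) atTop (𝓝 (wordMap f v a)) :=
        ((wordMap_continuous f hfc v).tendsto a).comp hca
      have heq : (fun j => u (φ (ψ j))) = fun j => wordMap f v (cc (φ (ψ j))) := by
        funext j; rw [hue, hφv]
      rw [heq] at h1
      have hxv : x = wordMap f v a := tendsto_nhds_unique h1 h2
      right
      exact Set.mem_biUnion (hφv 0 ▸ hwpre (φ 0)) ⟨a, haC, hxv.symm⟩
    · push_neg at hcase
      have hev : ∀ v, ∀ᶠ k in atTop, w k ≠ v := fun v => hcase v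
      have hlen : Tendsto (fun k => (w k).length) atTop atTop := by
        rw [tendsto_atTop]
        intro B
        have hF : {v : List (Fin N) | v.length < B}.Finite := by
          apply Set.Finite.subset (Set.Finite.biUnion (Set.finite_Iio B)
            (fun n _ => Set.finite_range (fun g : Fin n → Fin N => List.ofFn g)))
          intro v hv
          exact Set.mem_biUnion hv ⟨v.get, List.ofFn_get v⟩
        have hall := (eventually_all_finite hF).2 (fun v _ => hev v)
        filter_upwards [hall] with k hk
        by_contra hB
        push_neg at hB
        exact hk (w k) hB rfl
      choose ω hωS n hn using hwpre
      have hlen' : ∀ k, (w k).length = n k := fun k => by rw [hn k]; simp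
      have hntop : Tendsto n atTop atTop := hlen.congr hlen'
      obtain ⟨D, hD⟩ := hCc.isBounded.subset_closedBall x0
      have hdist : ∀ k, dist (u k) (Θ (ω k)) ≤ (D + M / (1 - c)) * c ^ n k := by
        intro k
        rw [hue k, theta_decomp f hfc Θ hΘ (ω k) (n k) x0, ← hn k, dist_wordMap f r hf]
        have h1 := wordRho_le r hc0 hrc (w k)
        rw [hlen' k] at h1
        have h2 : dist (cc k) (Θ fun m => ω k (n k + m)) ≤ D + M / (1 - c) := by
          calc dist (cc k) (Θ fun m => ω k (n k + m))
              ≤ dist (cc k) x0 + dist x0 (Θ fun m => ω k (n k + m)) := dist_triangle _ _ _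
            _ ≤ D + M / (1 - c) :=
                add_le_add (Metric.mem_closedBall.mp (hD (hccC k))) (hK _)
        calc wordRho r (w k) * dist (cc k) (Θ fun m => ω k (n k + m))
            ≤ c ^ n k * (D + M / (1 - c)) :=
              mul_le_mul h1.2 h2 dist_nonneg (pow_nonneg hc0 _)
          _ = (D + M / (1 - c)) * c ^ n k := mul_comm _ _
      have hzero : Tendsto (fun k => dist (u k) (Θ (ω k))) atTop (𝓝 0) := by
        apply squeeze_zero (fun k => dist_nonneg) hdist
        have := ((tendsto_pow_atTop_nhds_zero_of_lt_one hc0 hc1).comp hntop).const_mul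
          (D + M / (1 - c))
        simpa using this
      have hΘtend : Tendsto (fun k => Θ (ω k)) atTop (𝓝 x) := hux.congr_dist hzero
      left
      exact ((hS.image hΘc).isClosed).mem_of_tendsto hΘtend
        (Eventually.of_forall fun k => ⟨ω k, hωS k, rfl⟩)
  · apply Set.union_subset
    · rintro x ⟨ω, hω, rfl⟩
      refine mem_closure_of_tendsto (hΘ ω x0) (Eventually.of_forall fun nn => ?_)
      exact Set.mem_biUnion ⟨ω, hω, nn, rfl⟩ ⟨x0, hx0, rfl⟩
    · exact subset_closure
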